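/- (Rigidity of full Newton–Maclaurin chain) Let λ ∈ Γ_k^+ ⊂ ℝ^n and suppose that for some 1 ≤ l < k ≤ n equality holds: H_{k-1}(λ) H_l(λ) = H_k(λ) H_{l-1}(λ). Then λ_1 = λ_2 = ⋯ = λ_n. -/

import Mathlib

/-- The `k`-th elementary symmetric polynomial of `x ∈ ℝⁿ`. -/
noncomputable def sigmaE (n k : ℕ) (x : Fin n → ℝ) : ℝ :=
  ∑ s ∈ Finset.powersetCard k (Finset.univ : Finset (Fin n)), ∏ i ∈ s, x i

/-- The normalized `k`-th elementary symmetric polynomial `H_k = σ_k / C(n,k)`. -/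
noncomputable def Hnorm (n k : ℕ) (x : Fin n → ℝ) : ℝ := sigmaE n k x / (n.choose k)

/-- The Gårding cone `Γ_k⁺ = {x : σ_i(x) > 0 for all 1 ≤ i ≤ k}`. -/
def GardingCone (n k : ℕ) : Set (Fin n → ℝ) :=
  {x | ∀ i, 1 ≤ i → i ≤ k → 0 < sigmaE n i x}

/-!
The equality case of the Newton–Maclaurin inequality reduces to that of Newton's inequality
`H_{j-1} H_{j+1} ≤ H_j ^ 2`: on `Γ_k⁺` the ratios `H_j / H_{j-1}` are positive and, by Newton,
nonincreasing in `j ≤ k`, so `H_k / H_{k-1} = H_l / H_{l-1}` forces `H_{l+1} / H_l = H_l / H_{l-1}`.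

Newton's inequality, with its equality case, is proved by Rolle's theorem: the roots of the
derivative of `∏ (X - a)` form a multiset of one element fewer with the same normalized
elementary symmetric functions `H_m` in all degrees that still make sense. This reduces the
number of variables down to `j + 1`. There, unless some variable vanishes (and then `H_{j+1} = 0`),
inverting the variables turns `(H_{j-1}, H_j, H_{j+1})` into a multiple of `(H_2, H_1, H_0)`, and
`H_1 ^ 2 - H_2` is a multiple of the variance.
-/

open Polynomial

namespace Multiset

section CommRing

variable {R : Type*} [CommRing R]

theorem esymm_cons_succ (a : R) (s : Multiset R) (k : ℕ) :
    (a ::ₘ s).esymm (k + 1) = s.esymm (k + 1) + a * s.esymm k := by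
  simp [esymm, powersetCard_cons, map_map, sum_map_mul_left]

theorem esymm_one (s : Multiset R) : s.esymm 1 = s.sum := by
  simp [esymm, powersetCard_one]

theorem esymm_card (s : Multiset R) : s.esymm (card s) = s.prod := by
  simp [esymm, powersetCard_self]

theorem sq_sum_eq_sum_sq_add_two_mul_esymm_two (s : Multiset R) :
    s.sum ^ 2 = (s.map (· ^ 2)).sum + 2 * s.esymm 2 := by
  induction s using Multiset.induction with
  | empty => simp [esymm, powersetCard_zero_right]
  | cons a s ih =>
    rw [esymm_cons_succ, esymm_one, sum_cons, map_cons, sum_cons]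
    linear_combination ih

theorem sum_map_sub_sq (s : Multiset R) (c : R) :
    (s.map fun a => (a - c) ^ 2).sum =
      (s.map (· ^ 2)).sum - 2 * c * s.sum + card s * c ^ 2 := by
  induction s using Multiset.induction with
  | empty => simp
  | cons a s ih => simp only [map_cons, sum_cons, ih, card_cons]; push_cast; ring

end CommRing

/-- `H_k`, the mean of the products of the `k`-element submultisets. -/
noncomputable def esymmMean (s : Multiset ℝ) (k : ℕ) : ℝ := s.esymm k / (card s).choose k

theorem esymmMean_zero (s : Multiset ℝ) : s.esymmMean 0 = 1 := by
  simp [esymmMean, esymm]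

theorem esymmMean_card (s : Multiset ℝ) : s.esymmMean (card s) = s.prod := by
  simp [esymmMean, esymm_card]

section Variance

variable {s : Multiset ℝ}

theorem sq_esymmMean_one_sub_esymmMean_two (hs : 2 ≤ card s) :
    s.esymmMean 1 ^ 2 - s.esymmMean 2 =
      (s.map fun a => (a - s.esymmMean 1) ^ 2).sum / (card s * (card s - 1)) := by
  have hn : (2 : ℝ) ≤ card s := by exact_mod_cast hs
  have hsq := sq_sum_eq_sum_sq_add_two_mul_esymm_two s
  rw [sum_map_sub_sq]
  simp only [esymmMean, esymm_one, Nat.choose_one_right, Nat.cast_choose_two]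
  field_simp [show (card s : ℝ) - 1 ≠ 0 by linarith]
  linear_combination (card s : ℝ) * hsq

theorem forall_mem_map_sub_sq_nonneg (c : ℝ) : ∀ y ∈ s.map fun a => (a - c) ^ 2, 0 ≤ y :=
  fun _ hy => by obtain ⟨a, -, rfl⟩ := mem_map.1 hy; positivity

theorem esymmMean_two_le_sq (hs : 2 ≤ card s) : s.esymmMean 2 ≤ s.esymmMean 1 ^ 2 := by
  have hn : (2 : ℝ) ≤ card s := by exact_mod_cast hs
  have hvar := sq_esymmMean_one_sub_esymmMean_two hs
  have := div_nonneg (sum_nonneg (forall_mem_map_sub_sq_nonneg (s := s) (s.esymmMean 1)))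
    (by nlinarith : (0 : ℝ) ≤ card s * (card s - 1))
  linarith

theorem esymmMean_two_eq_sq_iff (hs : 2 ≤ card s) :
    s.esymmMean 2 = s.esymmMean 1 ^ 2 ↔ ∃ c, ∀ a ∈ s, a = c := by
  have hn : (2 : ℝ) ≤ card s := by exact_mod_cast hs
  have hvar := sq_esymmMean_one_sub_esymmMean_two hs
  constructor
  · intro h
    have hzero : (s.map fun a => (a - s.esymmMean 1) ^ 2).sum = 0 := by
      rw [h, sub_self, eq_comm, div_eq_zero_iff] at hvar
      exact hvar.resolve_right (by nlinarith)
    refine ⟨s.esymmMean 1, fun a ha => ?_⟩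
    have := single_le_sum (forall_mem_map_sub_sq_nonneg _) _
      (mem_map_of_mem (fun a => (a - s.esymmMean 1) ^ 2) ha)
    nlinarith
  · rintro ⟨c, hc⟩
    have hrep := eq_replicate_card.2 hc
    have hmean : s.esymmMean 1 = c := by
      rw [esymmMean, esymm_one, Nat.choose_one_right, hrep, sum_replicate, card_replicate,
        nsmul_eq_mul]
      field_simp
    have hzero : (s.map fun a => (a - c) ^ 2).sum = 0 := by
      rw [hrep, map_replicate, sub_self, zero_pow two_ne_zero, sum_replicate, smul_zero]
    rw [hmean, hzero, zero_div, sub_eq_zero] at hvar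
    rw [hmean, hvar]

end Variance

end Multiset

open Finset in
theorem Finset.esymm_map_val_univ_eq_prod_mul {ι : Type*} [Fintype ι] [DecidableEq ι]
    {x : ι → ℝ} (hx : ∀ i, x i ≠ 0) {k m : ℕ} (hkm : k + m = Fintype.card ι) :
    (univ.val.map x).esymm k = (∏ i, x i) * (univ.val.map fun i => (x i)⁻¹).esymm m := by
  rw [esymm_map_val, esymm_map_val, mul_sum]
  refine sum_nbij' (fun t => tᶜ) (fun t => tᶜ) (fun t ht => ?_) (fun t ht => ?_)
    (fun t _ => compl_compl t) (fun t _ => compl_compl t) (fun t _ => ?_)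
  · simp only [mem_powersetCard_univ, card_compl] at ht ⊢
    omega
  · simp only [mem_powersetCard_univ, card_compl] at ht ⊢
    omega
  · have : ∏ i ∈ tᶜ, x i ≠ 0 := prod_ne_zero_iff.2 fun i _ => hx i
    rw [← prod_mul_prod_compl t x, prod_inv_distrib]
    field_simp

namespace Multiset

theorem esymm_eq_prod_mul_esymm_map_inv {s : Multiset ℝ} (hs : 0 ∉ s) {k m : ℕ}
    (hkm : k + m = card s) : s.esymm k = s.prod * (s.map (·⁻¹)).esymm m := by
  classical
  have := Finset.esymm_map_val_univ_eq_prod_mul (x := fun a : s => (a : ℝ))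
    (fun a h => hs (h ▸ coe_mem)) (k := k) (m := m) (by simpa using hkm)
  simpa [Finset.prod_eq_multiset_prod, map_univ_comp_coe] using this

theorem esymmMean_eq_prod_mul_esymmMean_map_inv {s : Multiset ℝ} (hs : 0 ∉ s) {k m : ℕ}
    (hkm : k + m = card s) : s.esymmMean k = s.prod * (s.map (·⁻¹)).esymmMean m := by
  rw [esymmMean, esymmMean, esymm_eq_prod_mul_esymm_map_inv hs hkm, card_map, ← hkm,
    Nat.choose_symm_add, mul_div_assoc]

section NewtonTop

variable {s : Multiset ℝ} {j : ℕ}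

theorem esymmMean_mul_le_sq_of_card_eq (h : card s = j + 2) :
    s.esymmMean j * s.esymmMean (j + 2) ≤ s.esymmMean (j + 1) ^ 2 := by
  by_cases hs : 0 ∈ s
  · rw [← h, esymmMean_card, prod_eq_zero hs, mul_zero]
    positivity
  · rw [esymmMean_eq_prod_mul_esymmMean_map_inv hs (m := 2) h.symm,
      esymmMean_eq_prod_mul_esymmMean_map_inv hs (k := j + 1) (m := 1) (by omega),
      esymmMean_eq_prod_mul_esymmMean_map_inv hs (k := j + 2) (m := 0) (by omega), esymmMean_zero]
    have := esymmMean_two_le_sq (s := s.map (·⁻¹)) (by simp [h])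
    nlinarith [sq_nonneg s.prod]

theorem exists_forall_eq_of_esymmMean_mul_eq_sq_of_card_eq (h : card s = j + 2)
    (heq : s.esymmMean j * s.esymmMean (j + 2) = s.esymmMean (j + 1) ^ 2)
    (hne : s.esymmMean (j + 1) ≠ 0) : ∃ c, ∀ a ∈ s, a = c := by
  by_cases hs : 0 ∈ s
  · rw [← h, esymmMean_card, prod_eq_zero hs, mul_zero, eq_comm, pow_eq_zero_iff two_ne_zero]
      at heq
    exact absurd heq hne
  · rw [esymmMean_eq_prod_mul_esymmMean_map_inv hs (m := 2) h.symm,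
      esymmMean_eq_prod_mul_esymmMean_map_inv hs (k := j + 1) (m := 1) (by omega),
      esymmMean_eq_prod_mul_esymmMean_map_inv hs (k := j + 2) (m := 0) (by omega), esymmMean_zero] at heq
    have hprod : s.prod ≠ 0 := prod_ne_zero hs
    obtain ⟨c, hc⟩ := (esymmMean_two_eq_sq_iff (s := s.map (·⁻¹)) (by simp [h])).1
      (mul_left_cancel₀ (pow_ne_zero 2 hprod) (by linear_combination heq))
    exact ⟨c⁻¹, fun a ha => by rw [← hc _ (mem_map_of_mem _ ha), inv_inv]⟩

end NewtonTop

noncomputable def derivativeRoots (s : Multiset ℝ) : Multiset ℝ :=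
  (derivative (s.map fun a => X - C a).prod).roots

section DerivativeRoots

variable {s : Multiset ℝ} {n : ℕ}

theorem card_derivativeRoots (hs : card s = n + 1) : card s.derivativeRoots = n := by
  have hle := card_roots_le_derivative (s.map fun a => X - C a).prod
  have hdeg := (card_roots' _).trans (natDegree_derivative_le (s.map fun a => X - C a).prod)
  rw [roots_multiset_prod_X_sub_C, hs] at hle
  rw [natDegree_multiset_prod_X_sub_C_eq_card, hs, Nat.add_sub_cancel] at hdeg
  rw [derivativeRoots]
  omega

theorem mul_esymm_derivativeRoots (hs : card s = n + 1) {m : ℕ} (hm : m ≤ n) :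
    (n + 1 : ℝ) * s.derivativeRoots.esymm m = (n + 1 - m) * s.esymm m := by
  have hcard := card_derivativeRoots hs
  rw [derivativeRoots] at hcard ⊢
  set f := (s.map fun a => X - C a).prod
  have hdeg : (derivative f).natDegree = n := by
    have := natDegree_derivative_le f
    rw [natDegree_multiset_prod_X_sub_C_eq_card, hs, Nat.add_sub_cancel] at this
    have := card_roots' (derivative f)
    omega
  have hcoeff : ∀ i ≤ n,
      (derivative f).coeff i = (-1) ^ (n - i) * s.esymm (n - i) * (i + 1) := by
    intro i hi
    rw [coeff_derivative, prod_X_sub_C_coeff s (by omega), hs,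
      show n + 1 - (i + 1) = n - i by omega]
  have hzero : s.esymm 0 = 1 := by simp [esymm]
  have hvieta := coeff_eq_esymm_roots_of_card (p := derivative f) (by rw [hdeg]; exact hcard)
    (k := n - m) (by omega)
  rw [Polynomial.leadingCoeff, hdeg, hcoeff n le_rfl, hcoeff (n - m) (by omega),
    show n - (n - m) = m by omega, Nat.sub_self, pow_zero, hzero, Nat.cast_sub hm] at hvieta
  refine mul_left_cancel₀ (pow_ne_zero m (neg_ne_zero.2 one_ne_zero)) ?_
  linear_combination -hvieta

theorem esymmMean_derivativeRoots (hs : card s = n + 1) {m : ℕ} (hm : m ≤ n) :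
    s.derivativeRoots.esymmMean m = s.esymmMean m := by
  have hchoose : (n.choose m : ℝ) * (n + 1) = (n + 1).choose m * (n + 1 - m) := by
    have := congrArg (Nat.cast (R := ℝ)) (Nat.choose_mul_succ_eq n m)
    push_cast [Nat.cast_sub (by omega : m ≤ n + 1)] at this
    exact this
  have hpos : (0 : ℝ) < n.choose m := by exact_mod_cast Nat.choose_pos hm
  have hpos' : (0 : ℝ) < (n + 1).choose m := by exact_mod_cast Nat.choose_pos (by omega)
  rw [esymmMean, esymmMean, card_derivativeRoots hs, hs, div_eq_div_iff hpos.ne' hpos'.ne']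
  refine mul_left_cancel₀ n.cast_add_one_ne_zero ?_
  linear_combination ((n + 1).choose m : ℝ) * mul_esymm_derivativeRoots hs hm - s.esymm m * hchoose

end DerivativeRoots

section Newton

variable {s : Multiset ℝ} {j : ℕ}

theorem esymmMean_mul_le_sq (h : j + 2 ≤ card s) :
    s.esymmMean j * s.esymmMean (j + 2) ≤ s.esymmMean (j + 1) ^ 2 := by
  obtain ⟨d, hd⟩ := Nat.exists_eq_add_of_le h
  clear h
  induction d generalizing s with
  | zero => exact esymmMean_mul_le_sq_of_card_eq hd
  | succ d ih =>
    have hs : card s = j + 2 + d + 1 := hd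
    have := ih (card_derivativeRoots hs)
    rwa [esymmMean_derivativeRoots hs (by omega), esymmMean_derivativeRoots hs (by omega),
      esymmMean_derivativeRoots hs (by omega)] at this

theorem exists_forall_eq_of_esymmMean_mul_eq_sq (h : j + 2 ≤ card s)
    (heq : s.esymmMean j * s.esymmMean (j + 2) = s.esymmMean (j + 1) ^ 2)
    (hne : s.esymmMean (j + 1) ≠ 0) : ∃ c, ∀ a ∈ s, a = c := by
  obtain ⟨d, hd⟩ := Nat.exists_eq_add_of_le h
  clear h
  induction d generalizing s with
  | zero => exact exists_forall_eq_of_esymmMean_mul_eq_sq_of_card_eq hd heq hne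
  | succ d ih =>
    have hs : card s = j + 2 + d + 1 := hd
    have hcard := card_derivativeRoots hs
    have hmean : ∀ m ≤ j + 2 + d, s.derivativeRoots.esymmMean m = s.esymmMean m :=
      fun m hm => esymmMean_derivativeRoots hs hm
    have hconst := ih (by rwa [hmean _ (by omega), hmean _ (by omega),
      hmean _ (by omega)]) (by rwa [hmean _ (by omega)]) hcard
    -- The roots of the derivative are all equal, so `H_2 = H_1 ^ 2` for them, hence for `s`.
    rw [← esymmMean_two_eq_sq_iff (by omega), hmean 2 (by omega), hmean 1 (by omega)] at hconst
    exact (esymmMean_two_eq_sq_iff (by omega)).1 hconst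

end Newton

end Multiset

theorem mul_eq_sq_of_logConcave_of_mul_eq {H : ℕ → ℝ} {i j : ℕ}
    (hpos : ∀ m ≤ j + 1, 0 < H m) (hconc : ∀ m, m + 2 ≤ j + 1 → H m * H (m + 2) ≤ H (m + 1) ^ 2)
    (hij : i < j) (heq : H j * H (i + 1) = H (j + 1) * H i) :
    H i * H (i + 2) = H (i + 1) ^ 2 := by
  set r : ℕ → ℝ := fun m => H (m + 1) / H m with hr
  have hanti : AntitoneOn r (Set.Icc 0 j) := by
    refine antitoneOn_of_add_one_le Set.ordConnected_Icc fun m _ _ hm => ?_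
    rw [hr, div_le_div_iff₀ (hpos _ (by simp at hm; omega)) (hpos _ (by simp at hm; omega))]
    nlinarith [hconc m (by simp at hm; omega)]
  have hji : r j = r i := by
    rw [hr, div_eq_div_iff (hpos _ (by omega)).ne' (hpos _ (by omega)).ne']
    linarith
  have hstep : r (i + 1) = r i := le_antisymm
    (hanti ⟨by omega, by omega⟩ ⟨by omega, by omega⟩ (by omega))
    (hji ▸ hanti ⟨by omega, by omega⟩ ⟨by omega, by omega⟩ (by omega))
  rw [hr, div_eq_div_iff (hpos _ (by omega)).ne' (hpos _ (by omega)).ne'] at hstep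
  linarith

theorem Hnorm_eq_esymmMean (n m : ℕ) (x : Fin n → ℝ) :
    Hnorm n m x = (Finset.univ.val.map x).esymmMean m := by
  rw [Hnorm, sigmaE, Multiset.esymmMean, Finset.esymm_map_val, Multiset.card_map,
    Finset.card_val, Finset.card_univ, Fintype.card_fin]

theorem Hnorm_pos_of_mem_gardingCone {n k m : ℕ} {x : Fin n → ℝ} (hx : x ∈ GardingCone n k)
    (hkn : k ≤ n) (hm : m ≤ k) : 0 < Hnorm n m x := by
  rcases Nat.eq_zero_or_pos m with rfl | hm0
  · simp [Hnorm_eq_esymmMean, Multiset.esymmMean_zero]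
  · exact div_pos (hx m hm0 hm) (by exact_mod_cast Nat.choose_pos (hm.trans hkn))

/-- Rigidity in the Newton–Maclaurin inequality: if `λ ∈ Γ_k⁺` and
`H_{k-1}(λ) H_l(λ) = H_k(λ) H_{l-1}(λ)` for some `1 ≤ l < k ≤ n`, then all
entries of `λ` are equal. -/
theorem stmt14 (n k l : ℕ) (hl : 1 ≤ l) (hlk : l < k) (hkn : k ≤ n)
    (x : Fin n → ℝ) (hx : x ∈ GardingCone n k)
    (heq : Hnorm n (k-1) x * Hnorm n l x = Hnorm n k x * Hnorm n (l-1) x) :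
    ∀ i j : Fin n, x i = x j := by
  obtain ⟨i, rfl⟩ : ∃ i, l = i + 1 := ⟨l - 1, by omega⟩
  obtain ⟨j, rfl⟩ : ∃ j, k = j + 1 := ⟨k - 1, by omega⟩
  simp only [Nat.add_sub_cancel, Hnorm_eq_esymmMean] at heq
  have hcard : Multiset.card (Finset.univ.val.map x) = n := by simp
  have hpos (m : ℕ) (hm : m ≤ j + 1) : 0 < (Finset.univ.val.map x).esymmMean m :=
    Hnorm_eq_esymmMean n m x ▸ Hnorm_pos_of_mem_gardingCone hx hkn hm
  have hsq := mul_eq_sq_of_logConcave_of_mul_eq hpos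
    (fun m hm => Multiset.esymmMean_mul_le_sq (by omega)) (by omega) heq
  obtain ⟨c, hc⟩ := Multiset.exists_forall_eq_of_esymmMean_mul_eq_sq (by omega) hsq
    (hpos (i + 1) (by omega)).ne'
  intro a b
  rw [hc _ (Multiset.mem_map_of_mem x (Finset.mem_univ a)),
    hc _ (Multiset.mem_map_of_mem x (Finset.mem_univ b))]
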